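/- Let (R,m) be a Noetherian local ring with m-adic completion R-hat, and A an Artinian R-module. Then A carries a natural structure of Artinian R-hat-module, and the attached primes of A over R are exactly the contractions to R of the attached primes of A over R-hat. -/

import Mathlib

universe u

noncomputable section

/-- Krull dimension of a module: the Krull dimension of `R` modulo the annihilator of `M`. -/
def moduleDim (R : Type*) [CommRing R] (M : Type*) [AddCommGroup M] [Module R M] :
    WithBot (WithTop ℕ) :=
  ringKrullDim (R ⧸ Module.annihilator R M)

/-- Depth of a module `M` relative to an ideal `I`: the supremum of the lengths of
regular sequences on `M` consisting of elements of `I`. -/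
def depthIn (R : Type*) [CommRing R] (I : Ideal R) (M : Type*) [AddCommGroup M]
    [Module R M] : ℕ∞ :=
  sSup {n : ℕ∞ | ∃ rs : List R, (rs.length : ℕ∞) = n ∧ (∀ r ∈ rs, r ∈ I) ∧
    RingTheory.Sequence.IsRegular M rs}

/-- A (Noetherian local) ring is Cohen-Macaulay if it is Noetherian, local, and its depth
equals its Krull dimension. -/
def IsCMLocalRing (A : Type*) [CommRing A] : Prop :=
  IsNoetherianRing A ∧ ∃ _h : IsLocalRing A,
    letI := _h
    (depthIn A (IsLocalRing.maximalIdeal A) A : WithBot ℕ∞) = ringKrullDim A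

/-- A module over a local ring is Cohen-Macaulay if it is zero or its depth equals
its dimension. -/
def IsCMModule (R : Type*) [CommRing R] [IsLocalRing R] (M : Type*) [AddCommGroup M]
    [Module R M] : Prop :=
  Subsingleton M ∨ (depthIn R (IsLocalRing.maximalIdeal R) M : WithBot ℕ∞) = moduleDim R M

/-- The non-Cohen-Macaulay locus of a module, as a set of prime ideals. -/
def nCMLocus (R : Type*) [CommRing R] (M : Type*) [AddCommGroup M] [Module R M] :
    Set (Ideal R) :=
  {p | ∃ h : p.IsPrime,
    letI := h
    ¬ IsCMModule (Localization.AtPrime p) (LocalizedModule p.primeCompl M)}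

/-- The support of a module, as a set of prime ideals. -/
def suppSet (R : Type*) [CommRing R] (M : Type*) [AddCommGroup M] [Module R M] :
    Set (Ideal R) :=
  {p | ∃ h : p.IsPrime,
    letI := h
    Nontrivial (LocalizedModule p.primeCompl M)}

/-- The dimension of a set of primes: the supremum of `dim R/p`. -/
def locusDim (R : Type*) [CommRing R] (s : Set (Ideal R)) : WithBot (WithTop ℕ) :=
  sSup ((fun p => ringKrullDim (R ⧸ p)) '' s)

/-- The subset of `Spec R` corresponding to a set of prime ideals. -/
def zariskiSet (R : Type*) [CommRing R] (s : Set (Ideal R)) : Set (PrimeSpectrum R) :=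
  {x | x.asIdeal ∈ s}

/-- A module is `p`-secondary if it is nonzero, `p` is the radical of its annihilator, and
every ring element acts either surjectively or nilpotently. -/
def IsSecondary (R : Type*) [CommRing R] (M : Type*) [AddCommGroup M] [Module R M]
    (p : Ideal R) : Prop :=
  Nontrivial M ∧ p = (Module.annihilator R M).radical ∧
    ∀ r : R, Function.Surjective (fun m : M => r • m) ∨ r ∈ (Module.annihilator R M).radical

/-- The attached primes of a module: primes `p` such that some quotient of `M`
is `p`-secondary. -/
def attachedPrimes (R : Type*) [CommRing R] (M : Type*) [AddCommGroup M] [Module R M] :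
    Set (Ideal R) :=
  {p | p.IsPrime ∧ ∃ N : Submodule R M, IsSecondary R (M ⧸ N) p}

/-- The `m`-adic completion of a local ring. -/
abbrev completionRing (R : Type u) [CommRing R] [IsLocalRing R] : Type u :=
  AdicCompletion (IsLocalRing.maximalIdeal R) R

/-- `R/p` is unmixed: all associated primes of its completion have the same dimension
`dim R/p`. -/
def IsUnmixed (R : Type u) [CommRing R] [IsLocalRing R] (p : Ideal R) : Prop :=
  ∀ P ∈ associatedPrimes (completionRing R)
      ((completionRing R) ⧸ p.map (algebraMap R (completionRing R))),
    ringKrullDim ((completionRing R) ⧸ P) = ringKrullDim (R ⧸ p)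

/-- The formal fiber of `R` at `p` is Cohen-Macaulay: for every prime `P` of the completion
lying over `p`, the local ring `R̂_P / p R̂_P` is Cohen-Macaulay. -/
def HasCMFormalFiberAt (R : Type u) [CommRing R] [IsLocalRing R] (p : Ideal R) : Prop :=
  ∀ (P : Ideal (completionRing R)) (hP : P.IsPrime),
    P.comap (algebraMap R (completionRing R)) = p →
    letI := hP
    IsCMLocalRing ((Localization.AtPrime P) ⧸
      p.map ((algebraMap (completionRing R) (Localization.AtPrime P)).comp
        (algebraMap R (completionRing R))))

/-- The ideal `a(M) = a_0(M) ⋯ a_{d-1}(M)`, the product of the annihilators of the local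
cohomology modules `H^i_m(M)` for `i < d`. -/
def aIdeal (R : Type u) [CommRing R] [IsLocalRing R] (M : Type u) [AddCommGroup M]
    [Module R M] (d : ℕ) : Ideal R :=
  ∏ i ∈ Finset.range d,
    Module.annihilator R
      ((localCohomology (IsLocalRing.maximalIdeal R) i).obj (ModuleCat.of R M))

/-- A chain is saturated if nothing can be inserted between consecutive elements. -/
def IsSaturatedChain {α : Type*} [Preorder α] (c : LTSeries α) : Prop :=
  ∀ i : Fin c.length, ∀ x : α, ¬ (c i.castSucc < x ∧ x < c i.succ)

/-- A ring is catenary if any two saturated chains of primes with the same endpoints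
have the same length. -/
def IsCatenaryRing (A : Type*) [CommRing A] : Prop :=
  ∀ c₁ c₂ : LTSeries (PrimeSpectrum A),
    c₁.head = c₂.head → c₁.last = c₂.last →
    IsSaturatedChain c₁ → IsSaturatedChain c₂ → c₁.length = c₂.length

end

/-!
Every element of an Artinian module `A` over a Noetherian local ring `(R, 𝔪)` is killed by a
power of `𝔪` (Nakayama applied to the stable value of `𝔪ⁿ · Ra`), so `x ∈ R̂` can act on `a` as
any `r ∈ R` congruent to `x` modulo such a power. Then `R̂` and `R` have the same submodules of
`A`: attached primes over `R̂` contract to attached primes over `R`, and conversely a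
`p`-secondary quotient of `A` has, by an irredundant secondary representation over `R̂`, a
quotient that is secondary over `R̂` for a prime lying over `p`.
-/

section IsSecondary

variable {R : Type*} [CommRing R] {M : Type*} [AddCommGroup M] [Module R M]

theorem surjective_pow_smul {r : R} (h : Function.Surjective fun m : M => r • m) (n : ℕ) :
    Function.Surjective fun m : M => r ^ n • m := by
  simpa only [smul_iterate] using h.iterate n

theorem not_surjective_smul_of_mem_radical_annihilator [Nontrivial M] {r : R}
    (hr : r ∈ (Module.annihilator R M).radical) : ¬Function.Surjective fun m : M => r • m := by
  intro hsurj
  obtain ⟨n, hn⟩ := hr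
  obtain ⟨m, hm⟩ := exists_ne (0 : M)
  obtain ⟨m', rfl⟩ := surjective_pow_smul hsurj n m
  exact hm (Module.mem_annihilator.mp hn m')

theorem IsSecondary.isPrime {p : Ideal R} (h : IsSecondary R M p) : p.IsPrime := by
  obtain ⟨hM, rfl, hsec⟩ := h
  refine ⟨fun htop => not_subsingleton M <|
    Module.annihilator_eq_top_iff.mp (Ideal.radical_eq_top.mp htop), fun {x y} hxy => ?_⟩
  refine or_iff_not_imp_left.mpr fun hx => ?_
  obtain ⟨n, hn⟩ := hxy
  refine ⟨n, Module.mem_annihilator.mpr fun m => ?_⟩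
  obtain ⟨m', rfl⟩ := surjective_pow_smul ((hsec x).resolve_right hx) n m
  rw [smul_smul, ← mul_pow, mul_comm y x]
  exact Module.mem_annihilator.mp hn m'

theorem IsSecondary.of_surjective {M' : Type*} [AddCommGroup M'] [Module R M'] [Nontrivial M']
    {p : Ideal R} (h : IsSecondary R M p) (g : M →ₗ[R] M') (hg : Function.Surjective g) :
    IsSecondary R M' p := by
  obtain ⟨-, rfl, hsec⟩ := h
  have hann := g.annihilator_le_of_surjective hg
  have hsurj (r : R) (hr : Function.Surjective fun m : M => r • m) :
      Function.Surjective fun m : M' => r • m := by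
    intro m'
    obtain ⟨m, rfl⟩ := hg m'
    obtain ⟨x, rfl⟩ := hr m
    exact ⟨g x, (map_smul g r x).symm⟩
  refine ⟨inferInstance, le_antisymm (Ideal.radical_mono hann) fun r hr => ?_,
    fun r => (hsec r).imp (hsurj r) (Ideal.radical_mono hann ·)⟩
  exact (hsec r).resolve_left fun hr' =>
    not_surjective_smul_of_mem_radical_annihilator hr (hsurj r hr')

theorem IsSecondary.of_equiv {M' : Type*} [AddCommGroup M'] [Module R M']
    {p : Ideal R} (h : IsSecondary R M p) (e : M ≃ₗ[R] M') : IsSecondary R M' p :=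
  haveI := h.1
  haveI := e.symm.toEquiv.nontrivial
  h.of_surjective e.toLinearMap e.surjective

theorem IsSecondary.restrictScalars {S : Type*} [CommRing S] [Algebra R S] [Module S M]
    [IsScalarTower R S M] {P : Ideal S} (h : IsSecondary S M P) :
    IsSecondary R M (P.comap (algebraMap R S)) := by
  obtain ⟨hM, rfl, hsec⟩ := h
  refine ⟨hM, by rw [Ideal.comap_radical, Module.comap_annihilator], fun r => ?_⟩
  rw [← Module.comap_annihilator (R := S), ← Ideal.comap_radical, Ideal.mem_comap]
  simpa only [algebraMap_smul] using hsec (algebraMap R S r)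

end IsSecondary

section Representation

variable {R : Type*} [CommRing R] {M : Type*} [AddCommGroup M] [Module R M] [IsArtinian R M]

/-- Fitting's lemma for `r • ·` on `N` splits `N` as the sum of a part where `r` is nilpotent and
a part where `r` is surjective; sup-irreducibility forces one of them to be all of `N`. -/
theorem isSecondary_of_supIrred {N : Submodule R M} (hN : SupIrred N) :
    IsSecondary R N (Module.annihilator R N).radical := by
  refine ⟨Submodule.nontrivial_iff_ne_bot.mpr hN.ne_bot, rfl, fun r => ?_⟩
  obtain ⟨n, hn⟩ := Filter.eventually_atTop.mp
    (algebraMap R (Module.End R N) r).eventually_codisjoint_ker_pow_range_pow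
  have hpow : algebraMap R (Module.End R N) r ^ (n + 1) = algebraMap R _ (r ^ (n + 1)) :=
    (map_pow _ _ _).symm
  have hsup : (LinearMap.ker (algebraMap R (Module.End R N) r ^ (n + 1))).map N.subtype ⊔
      (LinearMap.range (algebraMap R (Module.End R N) r ^ (n + 1))).map N.subtype = N := by
    rw [← Submodule.map_sup, codisjoint_iff.mp (hn (n + 1) n.le_succ), N.map_subtype_top]
  have heq_top {K : Submodule R N} (hK : K.map N.subtype = N) (m : N) : m ∈ K := by
    rw [Submodule.map_injective_of_injective N.injective_subtype
      (hK.trans N.map_subtype_top.symm)]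
    exact Submodule.mem_top
  rcases hN.2 hsup with hker | hrange
  · refine .inr ⟨n + 1, Module.mem_annihilator.mpr fun m => ?_⟩
    have hm := heq_top hker m
    rwa [LinearMap.mem_ker, hpow, Module.algebraMap_end_apply] at hm
  · refine .inl fun m => ?_
    obtain ⟨m', hm'⟩ := heq_top hrange m
    rw [hpow, Module.algebraMap_end_apply, pow_succ', mul_smul] at hm'
    exact ⟨r ^ n • m', hm'⟩

theorem exists_irredundant_secondary_representation :
    ∃ s : Finset (Submodule R M), (∀ N ∈ s, IsSecondary R N (Module.annihilator R N).radical) ∧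
      s.sup id = ⊤ ∧ ∀ N ∈ s, (s.erase N).sup id ≠ ⊤ := by
  classical
  let IsRep (s : Finset (Submodule R M)) : Prop :=
    (∀ N ∈ s, IsSecondary R N (Module.annihilator R N).radical) ∧ s.sup id = ⊤
  obtain ⟨s, hs, hirr⟩ := exists_supIrred_decomposition (⊤ : Submodule R M)
  obtain ⟨t, -, ht⟩ := exists_minimal_le_of_wellFoundedLT IsRep s
    ⟨fun N hN => isSecondary_of_supIrred (hirr hN), hs⟩
  refine ⟨t, ht.prop.1, ht.prop.2, fun N hN htop => ?_⟩
  exact ht.not_prop_of_lt (Finset.erase_ssubset hN)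
    ⟨fun N' hN' => ht.prop.1 N' (Finset.mem_of_mem_erase hN'), htop⟩

end Representation

theorem Submodule.annihilator_finset_sup {R M ι : Type*} [CommRing R] [AddCommGroup M]
    [Module R M] (s : Finset ι) (f : ι → Submodule R M) :
    (s.sup f).annihilator = s.inf fun i => (f i).annihilator := by
  classical
  induction s using Finset.induction_on with
  | empty => exact Submodule.annihilator_bot
  | insert i s _ ih => rw [Finset.sup_insert, Finset.inf_insert, Submodule.annihilator_sup, ih]

section AttachedPrimes

variable {R : Type*} [CommRing R] {M : Type*} [AddCommGroup M] [Module R M]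

theorem attachedPrimes_subset_of_surjective {M' : Type*} [AddCommGroup M'] [Module R M']
    (f : M →ₗ[R] M') (hf : Function.Surjective f) : attachedPrimes R M' ⊆ attachedPrimes R M := by
  rintro p ⟨hp, K, hK⟩
  refine ⟨hp, K.comap f, hK.of_equiv ?_⟩
  have hker : LinearMap.ker (K.mkQ ∘ₗ f) = K.comap f := by rw [LinearMap.ker_comp, K.ker_mkQ]
  have hsurj : Function.Surjective (K.mkQ ∘ₗ f) := (K.mkQ_surjective).comp hf
  exact (LinearMap.quotKerEquivOfSurjective _ hsurj).symm.trans
    (Submodule.quotEquivOfEq _ _ hker)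

variable {S : Type*} [CommRing S] [Algebra R S] [Module S M] [IsScalarTower R S M]

theorem image_comap_attachedPrimes_subset :
    Ideal.comap (algebraMap R S) '' attachedPrimes S M ⊆ attachedPrimes R M := by
  rintro _ ⟨P, ⟨hP, N, hN⟩, rfl⟩
  exact ⟨hP.comap _, N.restrictScalars R,
    hN.restrictScalars.of_equiv (Submodule.Quotient.restrictScalarsEquiv R N).symm⟩

/-- In an irredundant secondary representation `M = N₁ + ⋯ + Nₖ` over `S`, the prime `p` is the
intersection of the contractions of the `Pᵢ`, hence equal to one of them, say that of `Nⱼ`;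
then `M / ∑_{i ≠ j} Nᵢ` is a nonzero quotient of `Nⱼ`, so it is `Pⱼ`-secondary. -/
theorem exists_mem_attachedPrimes_comap_eq [IsArtinian S M] {p : Ideal R}
    (hp : IsSecondary R M p) : ∃ P ∈ attachedPrimes S M, P.comap (algebraMap R S) = p := by
  classical
  obtain ⟨s, hsec, htop, hirr⟩ := exists_irredundant_secondary_representation (R := S) (M := M)
  have hp_eq : p = s.inf fun N => ((Module.annihilator S N).radical).comap (algebraMap R S) := by
    rw [hp.2.1, ← Module.comap_annihilator (R := S), ← Submodule.annihilator_top, ← htop,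
      Submodule.annihilator_finset_sup, ← Ideal.comap_radical, ← Ideal.radicalInfTopHom_apply,
      map_finset_inf, Ideal.comap_finsetInf]
    rfl
  obtain ⟨N, hN, hNp⟩ := (Ideal.IsPrime.inf_le' hp.isPrime).mp hp_eq.ge
  set K := (s.erase N).sup id
  have hNK : N ⊔ K = ⊤ := by
    rw [← htop, ← Finset.insert_erase hN, Finset.sup_insert]
    rfl
  have : Nontrivial (M ⧸ K) := Submodule.Quotient.nontrivial_iff.mpr (hirr N hN)
  have hsurj : Function.Surjective (K.mkQ ∘ₗ N.subtype) := by
    rw [← LinearMap.range_eq_top, LinearMap.range_comp, Submodule.range_subtype,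
      Submodule.map_mkQ_eq_top, sup_comm, hNK]
  have hsecK := (hsec N hN).of_surjective _ hsurj
  exact ⟨_, ⟨hsecK.isPrime, K, hsecK⟩, le_antisymm hNp (hp_eq ▸ Finset.inf_le hN)⟩

theorem Submodule.exists_restrictScalars_eq (h : ∀ (x : S) (a : M), ∃ r : R, x • a = r • a)
    (N : Submodule R M) : ∃ N' : Submodule S M, N'.restrictScalars R = N :=
  ⟨{ N.toAddSubmonoid with
      smul_mem' := fun x a ha => by
        obtain ⟨r, hr⟩ := h x a
        exact hr ▸ N.smul_mem r ha }, rfl⟩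

theorem attachedPrimes_subset_image_comap [IsArtinian S M]
    (h : ∀ (x : S) (a : M), ∃ r : R, x • a = r • a) :
    attachedPrimes R M ⊆ Ideal.comap (algebraMap R S) '' attachedPrimes S M := by
  rintro p ⟨-, N, hN⟩
  obtain ⟨N', rfl⟩ := Submodule.exists_restrictScalars_eq h N
  obtain ⟨P, hP, rfl⟩ := exists_mem_attachedPrimes_comap_eq (S := S)
    (hN.of_equiv (Submodule.Quotient.restrictScalarsEquiv R N'))
  exact ⟨P, attachedPrimes_subset_of_surjective N'.mkQ N'.mkQ_surjective hP, rfl⟩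

end AttachedPrimes

theorem IsArtinian.exists_pow_smul_eq_zero {R M : Type*} [CommRing R] [IsNoetherianRing R]
    [AddCommGroup M] [Module R M] [IsArtinian R M] {I : Ideal R} (hI : I ≤ Ideal.jacobson ⊥)
    (a : M) : ∃ n : ℕ, ∀ c ∈ I ^ n, c • a = 0 := by
  obtain ⟨n, hn⟩ := IsArtinian.monotone_stabilizes (R := R) (M := M)
    ⟨fun n => OrderDual.toDual (I ^ n • (R ∙ a)),
      fun _ _ h => Submodule.smul_mono_left (Ideal.pow_le_pow_right h)⟩
  have hstab : I ^ n • (R ∙ a) = I ^ (n + 1) • (R ∙ a) := hn (n + 1) n.le_succ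
  have hbot : I ^ n • (R ∙ a) = ⊥ := by
    refine Submodule.eq_bot_of_le_smul_of_le_jacobson_bot I _
      (.smul (IsNoetherian.noetherian (I ^ n)) (Submodule.fg_span_singleton a)) ?_ hI
    rw [← Submodule.smul_assoc, Ideal.smul_eq_mul, ← pow_succ', ← hstab]
  refine ⟨n, fun c hc => ?_⟩
  simpa [hbot] using Submodule.smul_mem_smul hc (Submodule.mem_span_singleton_self a)

namespace AdicCompletion

variable {R : Type*} [CommRing R] {I : Ideal R}

theorem sub_mem_pow_of_evalₐ_eq {m n : ℕ} (hmn : m ≤ n) {x : AdicCompletion I R} {r s : R}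
    (hr : evalₐ I n x = Ideal.Quotient.mk _ r) (hs : evalₐ I m x = Ideal.Quotient.mk _ s) :
    r - s ∈ I ^ m := by
  induction x using AdicCompletion.induction_on with
  | h f =>
  rw [evalₐ_mk] at hr hs
  have h₁ : r - f.val n ∈ I ^ m := Ideal.pow_le_pow_right hmn (Ideal.Quotient.eq.mp hr.symm)
  have h₂ : f.val n - f.val m ∈ I ^ m := Ideal.Quotient.eq.mp (Ideal.mk_eq_mk I hmn f)
  have h₃ : f.val m - s ∈ I ^ m := Ideal.Quotient.eq.mp hs
  simpa using add_mem (add_mem h₁ h₂) h₃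

variable {M : Type*} [AddCommGroup M] [Module R M]
  (htors : ∀ a : M, ∃ n : ℕ, ∀ c ∈ I ^ n, c • a = 0)

noncomputable def smulOfPowTorsion (x : AdicCompletion I R) (a : M) : M :=
  (Ideal.Quotient.mk_surjective (evalₐ I (htors a).choose x)).choose • a

variable {htors} in
theorem smulOfPowTorsion_eq {x : AdicCompletion I R} {a : M} {n : ℕ} {r : R}
    (ha : ∀ c ∈ I ^ n, c • a = 0) (hr : evalₐ I n x = Ideal.Quotient.mk _ r) :
    smulOfPowTorsion htors x a = r • a := by
  have hk := (htors a).choose_spec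
  have hs := (Ideal.Quotient.mk_surjective (evalₐ I (htors a).choose x)).choose_spec
  rw [smulOfPowTorsion, ← sub_eq_zero, ← sub_smul]
  rcases le_total n (htors a).choose with h | h
  · exact ha _ (sub_mem_pow_of_evalₐ_eq h hs.symm hr)
  · rw [← neg_sub, neg_smul, neg_eq_zero]
    exact hk _ (sub_mem_pow_of_evalₐ_eq h hr hs.symm)

theorem exists_smulOfPowTorsion_eq {a : M} {n : ℕ} (ha : ∀ c ∈ I ^ n, c • a = 0)
    (x : AdicCompletion I R) :
    ∃ r : R, evalₐ I n x = Ideal.Quotient.mk _ r ∧ smulOfPowTorsion htors x a = r • a :=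
  have ⟨r, hr⟩ := Ideal.Quotient.mk_surjective (evalₐ I n x)
  ⟨r, hr.symm, smulOfPowTorsion_eq ha hr.symm⟩

noncomputable abbrev moduleOfPowTorsion : Module (AdicCompletion I R) M where
  smul := smulOfPowTorsion htors
  one_smul a := by
    obtain ⟨n, ha⟩ := htors a
    exact (smulOfPowTorsion_eq ha (r := 1) (by simp)).trans (one_smul R a)
  mul_smul x y a := by
    obtain ⟨n, ha⟩ := htors a
    obtain ⟨r, hr, hra⟩ := exists_smulOfPowTorsion_eq htors ha x
    obtain ⟨s, hs, hsa⟩ := exists_smulOfPowTorsion_eq htors ha y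
    have hsa_kill : ∀ c ∈ I ^ n, c • s • a = 0 := fun c hc => by rw [smul_comm, ha c hc, smul_zero]
    change smulOfPowTorsion htors (x * y) a =
      smulOfPowTorsion htors x (smulOfPowTorsion htors y a)
    rw [hsa, smulOfPowTorsion_eq hsa_kill hr, smulOfPowTorsion_eq ha (r := r * s)
      (by rw [map_mul, hr, hs, map_mul]), mul_smul]
  smul_zero x := smul_zero _
  smul_add x a b := by
    obtain ⟨m, ha⟩ := htors a
    obtain ⟨n, hb⟩ := htors b
    have ha' (c) (hc : c ∈ I ^ max m n) : c • a = 0 :=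
      ha c (Ideal.pow_le_pow_right (le_max_left m n) hc)
    have hb' (c) (hc : c ∈ I ^ max m n) : c • b = 0 :=
      hb c (Ideal.pow_le_pow_right (le_max_right m n) hc)
    have hab (c) (hc : c ∈ I ^ max m n) : c • (a + b) = 0 := by
      rw [smul_add, ha' c hc, hb' c hc, add_zero]
    obtain ⟨r, hr, hrab⟩ := exists_smulOfPowTorsion_eq htors hab x
    change smulOfPowTorsion htors x (a + b) =
      smulOfPowTorsion htors x a + smulOfPowTorsion htors x b
    rw [hrab, smulOfPowTorsion_eq ha' hr, smulOfPowTorsion_eq hb' hr, smul_add]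
  add_smul x y a := by
    obtain ⟨n, ha⟩ := htors a
    obtain ⟨r, hr, hra⟩ := exists_smulOfPowTorsion_eq htors ha x
    obtain ⟨s, hs, hsa⟩ := exists_smulOfPowTorsion_eq htors ha y
    change smulOfPowTorsion htors (x + y) a =
      smulOfPowTorsion htors x a + smulOfPowTorsion htors y a
    rw [hra, hsa, smulOfPowTorsion_eq ha (r := r + s) (by rw [map_add, hr, hs, map_add]),
      add_smul]
  zero_smul a := by
    obtain ⟨n, ha⟩ := htors a
    exact (smulOfPowTorsion_eq ha (r := 0) (by simp)).trans (zero_smul R a)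

theorem smulOfPowTorsion_algebraMap (r : R) (a : M) :
    smulOfPowTorsion htors (algebraMap R (AdicCompletion I R) r) a = r • a :=
  smulOfPowTorsion_eq (htors a).choose_spec (AlgHom.commutes _ r)

end AdicCompletion

theorem artinian_module_completion_structure_and_attachedPrimes
    (R : Type u) [CommRing R] [IsNoetherianRing R] [IsLocalRing R]
    (A : Type u) [AddCommGroup A] [Module R A] [IsArtinian R A] :
    ∃ inst : Module (completionRing R) A,
      (letI := inst;
        ∀ (r : R) (a : A), (algebraMap R (completionRing R) r) • a = r • a) ∧
      (letI := inst;
        IsArtinian (completionRing R) A) ∧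
      (letI := inst;
        attachedPrimes R A =
          (fun P => P.comap (algebraMap R (completionRing R))) ''
            attachedPrimes (completionRing R) A) := by
  have htors : ∀ a : A, ∃ n : ℕ, ∀ c ∈ IsLocalRing.maximalIdeal R ^ n, c • a = 0 :=
    IsArtinian.exists_pow_smul_eq_zero (IsLocalRing.jacobson_eq_maximalIdeal ⊥ bot_ne_top).ge
  let := AdicCompletion.moduleOfPowTorsion htors
  have hsmul (r : R) (a : A) : algebraMap R (completionRing R) r • a = r • a :=
    AdicCompletion.smulOfPowTorsion_algebraMap htors r a
  have := IsScalarTower.of_algebraMap_smul hsmul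
  have : IsArtinian (completionRing R) A := isArtinian_of_tower R ‹_›
  have hlift (x : completionRing R) (a : A) : ∃ r : R, x • a = r • a := ⟨_, rfl⟩
  exact ⟨_, hsmul, inferInstance,
    (attachedPrimes_subset_image_comap hlift).antisymm image_comap_attachedPrimes_subset⟩
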